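/- Per-user conditional mutual information inequality for the binary OR multiple access channel: let t ≥ 2, p ∈ (0,1), and let W be nondegenerate (W(·|0) ≠ W(·|1)). Then for every s with 1 ≤ s < t, I(X_1,…,X_s ; Y | X_{s+1},…,X_t) / s > I(X_1,…,X_t ; Y) / t. -/

import Mathlib

open Finset
open scoped Classical

noncomputable section

/-- The Bernoulli probability mass function on `Bool` with parameter `p`. -/
def bern (p : ℝ) (b : Bool) : ℝ := if b then p else 1 - p

/-- The binary OR of a finite family of bits. -/
def orB {t : ℕ} (x : Fin t → Bool) : Bool := decide (∃ i, x i = true)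

/-- Mutual information (natural logarithm) of a joint pmf on a product of two finite sets. -/
def MI {A B : Type} [Fintype A] [Fintype B] (μ : A → B → ℝ) : ℝ :=
  ∑ a : A, ∑ b : B,
    μ a b * Real.log (μ a b / ((∑ b' : B, μ a b') * (∑ a' : A, μ a' b)))

/-- Conditional mutual information `I(A;B|C)` (natural logarithm) of a joint pmf on a
product of three finite sets, conditioning on the third coordinate. -/
def CMI {A B C : Type} [Fintype A] [Fintype B] [Fintype C] (μ : A → B → C → ℝ) : ℝ :=
  ∑ a : A, ∑ b : B, ∑ c : C,
    μ a b c * Real.log ((μ a b c * (∑ a' : A, ∑ b' : B, μ a' b' c)) /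
      ((∑ b' : B, μ a b' c) * (∑ a' : A, μ a' b c)))

/-- Joint pmf of `((X_1,…,X_s), Y, (X_{s+1},…,X_{s+r}))` for the `(s+r)`-user binary OR
multiple access channel at parameter `p` with channel `W`: all inputs are i.i.d.
Bernoulli(`p`), and `Y ∼ W(·|Z)` where `Z` is the binary OR of all `s+r` inputs. -/
def macAYC {Y : Type} [Fintype Y] (W : Y → Bool → ℝ) (p : ℝ) (s r : ℕ)
    (a : Fin s → Bool) (y : Y) (c : Fin r → Bool) : ℝ :=
  (∏ i, bern p (a i)) * (∏ j, bern p (c j)) * W y (orB a || orB c)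

/-- Joint pmf of `((X_1,…,X_{s+r}), Y)` for the same channel, the input block written as a
pair `((X_1,…,X_s), (X_{s+1},…,X_{s+r}))`. -/
def macFull {Y : Type} [Fintype Y] (W : Y → Bool → ℝ) (p : ℝ) (s r : ℕ)
    (x : (Fin s → Bool) × (Fin r → Bool)) (y : Y) : ℝ :=
  (∏ i, bern p (x.1 i)) * (∏ j, bern p (x.2 j)) * W y (orB x.1 || orB x.2)

/-! Write `a = W(y|0)`, `b = W(y|1)` for an output letter `y`. Since `Y` depends on the inputs
only through their OR, which is `0` with probability `(1-p)^t`,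
`I(X_1,…,X_t;Y) = ∑_y infoTerm a b ((1-p)^t)`.
Given `X_{s+1},…,X_t`, the first `s` users face an `s`-user OR channel if those inputs are all `0`
(probability `(1-p)^r`) and a useless one otherwise, so
`I(X_1,…,X_s;Y|X_{s+1},…,X_t) = (1-p)^r ∑_y infoTerm a b ((1-p)^s)`.
As `-log ((1-p)^n) = -n log (1-p)`, the claim says that `infoTerm a b w / (w·(-log w))`, summed
over `y`, is larger at `w = (1-p)^s` than at `w = (1-p)^t`. In the variable `x = -log w` that
ratio is `g(x)/x` with `g(x) = eˣ·infoTerm a b (e⁻ˣ)`; `g` is concave with `g(0) = 0`, and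
strictly concave when `b > 0` and `a ≠ b`, which nondegeneracy of `W` provides for some `y`.
-/

open Real

lemma orB_eq_false_iff {n : ℕ} (x : Fin n → Bool) : orB x = false ↔ x = fun _ => false := by
  simp [orB, funext_iff]

lemma sum_prod_bern (p : ℝ) (n : ℕ) : ∑ x : Fin n → Bool, ∏ i, bern p (x i) = 1 := by
  rw [← Fintype.piFinset_univ, ← Finset.prod_univ_sum]
  simp [bern]

lemma sum_prod_bern_mul_orB (p : ℝ) (n : ℕ) (h : Bool → ℝ) :
    ∑ x : Fin n → Bool, (∏ i, bern p (x i)) * h (orB x)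
      = (1 - p) ^ n * h false + (1 - (1 - p) ^ n) * h true := by
  have split (x : Fin n → Bool) : (∏ i, bern p (x i)) * h (orB x)
      = (∏ i, bern p (x i)) * h true
        + if x = (fun _ => false) then (∏ i, bern p (x i)) * (h false - h true) else 0 := by
    by_cases hx : x = fun _ => false
    · rw [(orB_eq_false_iff x).mpr hx, if_pos hx]
      ring
    · rw [Bool.eq_true_of_not_eq_false (mt (orB_eq_false_iff x).mp hx), if_neg hx]
      ring
  simp only [split, Finset.sum_add_distrib, Finset.sum_ite_eq', Finset.mem_univ, if_true,
    ← Finset.sum_mul, sum_prod_bern]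
  simp [bern]
  ring

lemma sum_prod_bern_mul_orB_or (p : ℝ) (s r : ℕ) (h : Bool → ℝ) :
    ∑ x : (Fin s → Bool) × (Fin r → Bool),
        (∏ i, bern p (x.1 i)) * (∏ j, bern p (x.2 j)) * h (orB x.1 || orB x.2)
      = (1 - p) ^ (s + r) * h false + (1 - (1 - p) ^ (s + r)) * h true := by
  simp only [Fintype.sum_prod_type, mul_assoc, ← Finset.mul_sum]
  have inner (a : Fin s → Bool) :
      ∑ c : Fin r → Bool, (∏ j, bern p (c j)) * h (orB a || orB c)
        = (1 - p) ^ r * h (orB a) + (1 - (1 - p) ^ r) * h true := by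
    simpa using sum_prod_bern_mul_orB p r (fun z => h (orB a || z))
  simp only [inner]
  rw [sum_prod_bern_mul_orB p s (fun z => (1 - p) ^ r * h z + (1 - (1 - p) ^ r) * h true)]
  ring

/-- Contribution of an output letter `y` with `W(y|0) = a`, `W(y|1) = b` to `I(Z;Y)` when
`P(Z = 0) = u`. -/
def infoTerm (a b u : ℝ) : ℝ :=
  u * a * log (a / (u * a + (1 - u) * b)) + (1 - u) * b * log (b / (u * a + (1 - u) * b))

lemma infoTerm_zero (a b : ℝ) : infoTerm a b 0 = 0 := by
  rcases eq_or_ne b 0 with hb | hb <;> simp [infoTerm, *]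

lemma MI_eq_sum_infoTerm {X Y : Type} [Fintype X] [Fintype Y] (P : X → ℝ) (f : X → Bool)
    (W : Y → Bool → ℝ) (hW1 : ∀ z, ∑ y, W y z = 1) (u : ℝ)
    (hu : ∀ h : Bool → ℝ, ∑ x, P x * h (f x) = u * h false + (1 - u) * h true) :
    MI (fun x y => P x * W y (f x)) = ∑ y, infoTerm (W y false) (W y true) u := by
  set m : Y → ℝ := fun y => u * W y false + (1 - u) * W y true
  have term (x : X) (y : Y) :
      P x * W y (f x) * log (P x * W y (f x) /
          ((∑ y', P x * W y' (f x)) * ∑ x', P x' * W y (f x')))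
        = P x * (W y (f x) * log (W y (f x) / m y)) := by
    rw [← Finset.mul_sum, hW1, mul_one, hu]
    rcases eq_or_ne (P x) 0 with hP | hP
    · simp [hP]
    · rw [mul_div_mul_left _ _ hP, mul_assoc]
  simp only [MI, term]
  simp only [← Finset.mul_sum]
  rw [hu (fun z => ∑ y, W y z * log (W y z / m y)), Finset.mul_sum, Finset.mul_sum,
    ← Finset.sum_add_distrib]
  simp only [infoTerm, m, mul_assoc]

lemma CMI_eq_sum_mul_MI {A B C : Type} [Fintype A] [Fintype B] [Fintype C] (ρ : C → ℝ)
    (ν : C → A → B → ℝ) (hν : ∀ c, ∑ a, ∑ b, ν c a b = 1) :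
    CMI (fun a b c => ρ c * ν c a b) = ∑ c, ρ c * MI (ν c) := by
  have term (a : A) (b : B) (c : C) :
      ρ c * ν c a b * log (ρ c * ν c a b * (∑ a', ∑ b', ρ c * ν c a' b') /
          ((∑ b', ρ c * ν c a b') * ∑ a', ρ c * ν c a' b))
        = ρ c * (ν c a b * log (ν c a b / ((∑ b', ν c a b') * ∑ a', ν c a' b))) := by
    simp only [← Finset.mul_sum, hν, mul_one]
    rcases eq_or_ne (ρ c) 0 with hρ | hρ
    · simp [hρ]
    · rw [show ρ c * ν c a b * ρ c = (ρ c * ρ c) * ν c a b by ring,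
        show ρ c * (∑ b', ν c a b') * (ρ c * ∑ a', ν c a' b)
          = (ρ c * ρ c) * ((∑ b', ν c a b') * ∑ a', ν c a' b) by ring,
        mul_div_mul_left _ _ (mul_ne_zero hρ hρ), mul_assoc]
  simp only [CMI, term]
  rw [Finset.sum_congr rfl fun a _ => Finset.sum_comm, Finset.sum_comm]
  simp only [MI, ← Finset.mul_sum]

lemma MI_macFull {Y : Type} [Fintype Y] (W : Y → Bool → ℝ) (hW1 : ∀ z, ∑ y, W y z = 1)
    (p : ℝ) (s r : ℕ) :
    MI (macFull W p s r) = ∑ y, infoTerm (W y false) (W y true) ((1 - p) ^ (s + r)) :=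
  MI_eq_sum_infoTerm
    (fun x : (Fin s → Bool) × (Fin r → Bool) => (∏ i, bern p (x.1 i)) * ∏ j, bern p (x.2 j))
    (fun x => orB x.1 || orB x.2) W hW1 _ (sum_prod_bern_mul_orB_or p s r)

lemma CMI_macAYC {Y : Type} [Fintype Y] (W : Y → Bool → ℝ) (hW1 : ∀ z, ∑ y, W y z = 1)
    (p : ℝ) (s r : ℕ) :
    CMI (macAYC W p s r) = (1 - p) ^ r * ∑ y, infoTerm (W y false) (W y true) ((1 - p) ^ s) := by
  set P : (Fin s → Bool) → ℝ := fun a => ∏ i, bern p (a i)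
  have hμ :
      macAYC W p s r = fun a y c => (∏ j, bern p (c j)) * (P a * W y (orB a || orB c)) := by
    funext a y c
    simp only [macAYC, P]
    ring
  have hν (c : Fin r → Bool) : ∑ a, ∑ y, P a * W y (orB a || orB c) = 1 := by
    simp only [← Finset.mul_sum, hW1, mul_one, P, sum_prod_bern]
  have hfalse : MI (fun a y => P a * W y (orB a || false))
      = ∑ y, infoTerm (W y false) (W y true) ((1 - p) ^ s) :=
    MI_eq_sum_infoTerm P _ W hW1 _ fun h => by simpa using sum_prod_bern_mul_orB p s h
  have htrue : MI (fun a y => P a * W y (orB a || true)) = 0 := by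
    rw [MI_eq_sum_infoTerm P _ W hW1 0 fun h => by simp [← Finset.sum_mul, P, sum_prod_bern]]
    simp [infoTerm_zero]
  rw [hμ, CMI_eq_sum_mul_MI _ _ hν,
    sum_prod_bern_mul_orB p r fun z => MI fun a y => P a * W y (orB a || z), hfalse, htrue]
  ring

section ExpCoordinate

variable {a b : ℝ}

def mixExp (a b x : ℝ) : ℝ := b + exp (-x) * (a - b)

/-- `exp x * infoTerm a b (exp (-x))`, with the quotients expanded so that it can be
differentiated; `mixExp a b x` is the output probability at `P(Z = 0) = exp (-x)`. -/
def infoTermExp (a b x : ℝ) : ℝ :=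
  a * log a + (exp x - 1) * (b * log b) - exp x * (mixExp a b x * log (mixExp a b x))

lemma infoTermExp_zero (a b : ℝ) : infoTermExp a b 0 = 0 := by
  simp [infoTermExp, mixExp]

lemma infoTerm_eq_mul_infoTermExp (ha : 0 ≤ a) (hb : 0 < b) {w : ℝ} (hw0 : 0 < w)
    (hw1 : w < 1) : infoTerm a b w = w * infoTermExp a b (-log w) := by
  have hm : 0 < w * a + (1 - w) * b := by nlinarith
  have hmix : mixExp a b (-log w) = w * a + (1 - w) * b := by
    rw [mixExp, neg_neg, exp_log hw0]
    ring
  have hlog_div (c : ℝ) : c * log (c / (w * a + (1 - w) * b))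
      = c * log c - c * log (w * a + (1 - w) * b) := by
    rcases eq_or_ne c 0 with hc | hc
    · simp [hc]
    · rw [log_div hc hm.ne', mul_sub]
  rw [infoTerm, infoTermExp, hmix, exp_neg, exp_log hw0, mul_assoc, hlog_div, mul_assoc,
    hlog_div]
  field_simp
  ring

lemma mixExp_pos (ha : 0 ≤ a) (hb : 0 < b) {x : ℝ} (hx : 0 < x) : 0 < mixExp a b x := by
  have : exp (-x) < 1 := exp_lt_one_iff.mpr (by linarith)
  have := exp_pos (-x)
  rw [mixExp]
  nlinarith

lemma mixExp_ne (hab : a ≠ b) (x : ℝ) : mixExp a b x ≠ b := by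
  simpa [mixExp] using mul_ne_zero (exp_pos (-x)).ne' (sub_ne_zero.mpr hab)

lemma hasDerivAt_mixExp (a b x : ℝ) : HasDerivAt (mixExp a b) (b - mixExp a b x) x :=
  (((hasDerivAt_neg' x).exp.mul_const (a - b)).const_add b).congr_deriv
    (by simp only [mixExp]; ring)

lemma hasDerivAt_infoTermExp {x : ℝ} (hm : mixExp a b x ≠ 0) :
    HasDerivAt (infoTermExp a b)
      (exp x * (b * log b - b * log (mixExp a b x) + mixExp a b x - b)) x := by
  have hmlog := (hasDerivAt_mul_log hm).comp x (hasDerivAt_mixExp a b x)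
  refine ((((hasDerivAt_exp x).sub_const 1).mul_const (b * log b)).const_add
    (a * log a)).sub ((hasDerivAt_exp x).mul hmlog) |>.congr_deriv ?_
  simp only [Function.comp_apply]
  ring

lemma hasDerivAt_deriv_infoTermExp (hb : b ≠ 0) {x : ℝ} (hm : mixExp a b x ≠ 0) :
    HasDerivAt (fun x => exp x * (b * log b - b * log (mixExp a b x) + mixExp a b x - b))
      (exp x * (b * (log (b / mixExp a b x) - (b / mixExp a b x - 1)))) x := by
  have hlog := (hasDerivAt_log hm).comp x (hasDerivAt_mixExp a b x)
  refine (hasDerivAt_exp x).mul ((((hlog.const_mul b).const_sub (b * log b)).add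
    (hasDerivAt_mixExp a b x)).sub_const b) |>.congr_deriv ?_
  simp only [Function.comp_apply, Pi.add_apply]
  rw [log_div hb hm]
  field_simp
  ring

lemma strictConcaveOn_infoTermExp (ha : 0 ≤ a) (hb : 0 < b) (hab : a ≠ b) :
    StrictConcaveOn ℝ (Set.Ici 0) (infoTermExp a b) := by
  refine strictConcaveOn_of_deriv2_neg (convex_Ici 0) ?_ fun x hx => ?_
  · exact Continuous.continuousOn (by unfold infoTermExp mixExp; fun_prop)
  rw [interior_Ici] at hx
  have hm := mixExp_pos ha hb hx
  have hderiv_eq : deriv (infoTermExp a b) =ᶠ[nhds x]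
      fun x => exp x * (b * log b - b * log (mixExp a b x) + mixExp a b x - b) :=
    Filter.eventuallyEq_of_mem (Ioi_mem_nhds hx) fun y hy =>
      (hasDerivAt_infoTermExp (mixExp_pos ha hb hy).ne').deriv
  rw [Function.iterate_succ_apply, Function.iterate_one, hderiv_eq.deriv_eq,
    (hasDerivAt_deriv_infoTermExp hb.ne' hm.ne').deriv]
  have hlog_lt : log (b / mixExp a b x) < b / mixExp a b x - 1 :=
    log_lt_sub_one_of_pos (div_pos hb hm) fun h =>
      mixExp_ne hab x ((div_eq_one_iff_eq hm.ne').mp h).symm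
  exact mul_neg_of_pos_of_neg (exp_pos x) (mul_neg_of_pos_of_neg hb (by linarith))

end ExpCoordinate

lemma strictMonoOn_infoTerm_div {a b : ℝ} (ha : 0 ≤ a) (hb : 0 < b) (hab : a ≠ b) :
    StrictMonoOn (fun w => infoTerm a b w / (w * -log w)) (Set.Ioo 0 1) := by
  intro v ⟨hv0, hv1⟩ u ⟨hu0, hu1⟩ hvu
  simp only [infoTerm_eq_mul_infoTermExp ha hb hv0 hv1, infoTerm_eq_mul_infoTermExp ha hb hu0 hu1,
    mul_div_mul_left _ _ hv0.ne', mul_div_mul_left _ _ hu0.ne']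
  have hx : 0 < -log u := neg_pos.mpr (log_neg hu0 hu1)
  have hxy : -log u < -log v := neg_lt_neg (log_lt_log hv0 hvu)
  simpa [infoTermExp_zero] using (strictConcaveOn_infoTermExp ha hb hab).secant_strict_mono
    Set.self_mem_Ici hx.le (hx.trans hxy).le hx.ne' (hx.trans hxy).ne' hxy

lemma infoTerm_self (a w : ℝ) : infoTerm a a w = 0 := by
  rcases eq_or_ne a 0 with rfl | ha
  · simp [infoTerm]
  · simp [infoTerm, show w * a + (1 - w) * a = a by ring, ha]

lemma infoTerm_zero_right (a w : ℝ) : infoTerm a 0 w = a * (w * -log w) := by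
  rcases eq_or_ne a 0 with rfl | ha
  · simp [infoTerm]
  · simp [infoTerm, div_mul_cancel_right₀ ha, log_inv]
    ring

lemma monotoneOn_infoTerm_div {a b : ℝ} (ha : 0 ≤ a) (hb : 0 ≤ b) :
    MonotoneOn (fun w => infoTerm a b w / (w * -log w)) (Set.Ioo 0 1) := by
  rcases eq_or_ne a b with rfl | hab
  · simp only [infoTerm_self, zero_div]
    exact monotoneOn_const
  rcases hb.eq_or_lt with rfl | hb
  · intro v ⟨hv0, hv1⟩ u ⟨hu0, hu1⟩ _
    have hpos {w : ℝ} (hw0 : 0 < w) (hw1 : w < 1) : w * -log w ≠ 0 :=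
      (mul_pos hw0 (neg_pos.mpr (log_neg hw0 hw1))).ne'
    simp only [infoTerm_zero_right,
      mul_div_cancel_right₀ a (hpos hv0 hv1), mul_div_cancel_right₀ a (hpos hu0 hu1), le_refl]
  · exact (strictMonoOn_infoTerm_div ha hb hab).monotoneOn

lemma exists_ne_and_pos_of_sum_eq {ι : Type} [Fintype ι] {f g : ι → ℝ} (hf : ∀ i, 0 ≤ f i)
    (hfg : ∑ i, f i = ∑ i, g i) (hne : ∃ i, f i ≠ g i) : ∃ i, f i ≠ g i ∧ 0 < g i := by
  by_contra! h
  have hle (i : ι) (_ : i ∈ Finset.univ) : g i ≤ f i := by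
    by_cases hi : f i = g i
    · exact hi.ge
    · exact (h i hi).trans (hf i)
  obtain ⟨i, hi⟩ := hne
  exact hi ((Finset.sum_eq_sum_iff_of_le hle).mp hfg.symm i (Finset.mem_univ i)).symm

lemma sum_infoTerm_div_lt {Y : Type} [Fintype Y] (W : Y → Bool → ℝ) (hW0 : ∀ y z, 0 ≤ W y z)
    (hW1 : ∀ z, ∑ y, W y z = 1) (hWnd : ∃ y, W y false ≠ W y true) {u v : ℝ} (hv0 : 0 < v)
    (hvu : v < u) (hu1 : u < 1) :
    (∑ y, infoTerm (W y false) (W y true) v) / (v * -log v)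
      < (∑ y, infoTerm (W y false) (W y true) u) / (u * -log u) := by
  have hv : v ∈ Set.Ioo 0 1 := ⟨hv0, hvu.trans hu1⟩
  have hu : u ∈ Set.Ioo 0 1 := ⟨hv0.trans hvu, hu1⟩
  obtain ⟨y₀, hne, hpos⟩ := exists_ne_and_pos_of_sum_eq (fun y => hW0 y false)
    ((hW1 false).trans (hW1 true).symm) hWnd
  simp only [Finset.sum_div]
  exact Finset.sum_lt_sum
    (fun y _ => monotoneOn_infoTerm_div (hW0 y false) (hW0 y true) hv hu hvu.le)
    ⟨y₀, Finset.mem_univ _, strictMonoOn_infoTerm_div (hW0 _ _) hpos hne hv hu hvu⟩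

/-- per-user conditional mutual information inequality for the binary OR
multiple access channel.  For `t = s + r ≥ 2` users (`1 ≤ s < t`), `p ∈ (0,1)` and a
nondegenerate channel `W`,
`I(X_1,…,X_s ; Y | X_{s+1},…,X_t)/s > I(X_1,…,X_t ; Y)/t`. -/
theorem statement7 (Y : Type) [Fintype Y] (W : Y → Bool → ℝ)
    (hW0 : ∀ y z, 0 ≤ W y z) (hW1 : ∀ z, ∑ y : Y, W y z = 1)
    (hWnd : ∃ y, W y false ≠ W y true)
    (p : ℝ) (hp : p ∈ Set.Ioo (0 : ℝ) 1)
    (s r : ℕ) (hs : 1 ≤ s) (hr : 1 ≤ r) :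
    MI (macFull W p s r) / ((s : ℝ) + r) < CMI (macAYC W p s r) / s := by
  rw [MI_macFull W hW1, CMI_macAYC W hW1]
  obtain ⟨hp0, hp1⟩ := hp
  have hq0 : 0 < 1 - p := by linarith
  have hq1 : 1 - p < 1 := by linarith
  generalize 1 - p = q at hq0 hq1 ⊢
  have hratio := sum_infoTerm_div_lt W hW0 hW1 hWnd (pow_pos hq0 (s + r))
    (pow_lt_pow_right_of_lt_one₀ hq0 hq1 (by omega : s < s + r)) (pow_lt_one₀ hq0.le hq1 (by omega))
  have hlog : log q < 0 := log_neg hq0 hq1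
  have key := mul_lt_mul_of_pos_left hratio (mul_pos (pow_pos hq0 (s + r)) (neg_pos.mpr hlog))
  simp only [log_pow, Nat.cast_add] at key
  have hlog_ne : log q ≠ 0 := hlog.ne
  have hs' : (0 : ℝ) < s := by exact_mod_cast hs
  have hsr : (0 : ℝ) < s + r := by positivity
  refine (Eq.trans_lt ?_ key).trans_eq ?_
  · field_simp
  · rw [pow_add]
    field_simp
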